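/- Let R be a zero-symmetric right near-ring and M a near-ring module over R. For each v ∈ {0,2,3,c}: if M is a v-prime R-module, then M is a v-classical prime R-module. -/
import Mathlib


open Pointwise

/-- A zero-symmetric right near-ring: `(R,+)` is a (not necessarily abelian) group,
`(R,·)` is a semigroup, right distributivity holds, and `r * 0 = 0`. -/
class NearRing (R : Type*) extends AddGroup R, Semigroup R where
  right_distrib : ∀ a b c : R, (a + b) * c = a * c + b * c
  mul_zero : ∀ a : R, a * 0 = 0

/-- A (left) near-ring module over a right near-ring `R`. -/
class NearRingModule (R : Type*) [NearRing R] (M : Type*) [AddGroup M] extends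
    SMul R M where
  add_smul : ∀ (r s : R) (m : M), (r + s) • m = r • m + s • m
  mul_smul : ∀ (r s : R) (m : M), (r * s) • m = r • s • m

/-- A subgroup of a (not necessarily abelian) additive group, as a set. -/
def IsSubgrp {G : Type*} [AddGroup G] (H : Set G) : Prop :=
  (0 : G) ∈ H ∧ (∀ x ∈ H, ∀ y ∈ H, x + y ∈ H) ∧ ∀ x ∈ H, -x ∈ H

/-- A normal subgroup of an additive group, as a set. -/
def IsNormalSubgrp {G : Type*} [AddGroup G] (H : Set G) : Prop :=
  IsSubgrp H ∧ ∀ g : G, ∀ h ∈ H, g + h + -g ∈ H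

/-- An `R`-submodule of a near-ring module `M`: a subgroup `N` with `RN ⊆ N`. -/
def IsRSubmodule (R : Type*) [NearRing R] {M : Type*} [AddGroup M]
    [NearRingModule R M] (N : Set M) : Prop :=
  IsSubgrp N ∧ ∀ r : R, ∀ n ∈ N, r • n ∈ N

/-- An `R`-ideal of a near-ring module `M`: a normal subgroup `P` with
`r • (m + p) - r • m ∈ P`. -/
def IsRIdeal (R : Type*) [NearRing R] {M : Type*} [AddGroup M]
    [NearRingModule R M] (P : Set M) : Prop :=
  IsNormalSubgrp P ∧ ∀ (r : R) (m : M), ∀ p ∈ P, r • (m + p) - r • m ∈ P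

/-- A (two-sided) ideal of the near-ring `R`. -/
def IsIdeal {R : Type*} [NearRing R] (I : Set R) : Prop :=
  IsNormalSubgrp I ∧ (∀ i ∈ I, ∀ r : R, i * r ∈ I) ∧
    ∀ r₁ r₂ : R, ∀ i ∈ I, r₁ * (r₂ + i) - r₁ * r₂ ∈ I

/-- A left `R`-subgroup of `R`: a subgroup `A` of `(R,+)` with `RA ⊆ A`. -/
def IsLeftRSubgroup {R : Type*} [NearRing R] (A : Set R) : Prop :=
  IsSubgrp A ∧ ∀ r : R, ∀ a ∈ A, r * a ∈ A

/-- `P` satisfies the 0-classical prime condition: `ABN ⊆ P` implies `AN ⊆ P` or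
`BN ⊆ P` for all ideals `A, B` of `R` and all `R`-submodules `N` of `M`. -/
def Classical0Prime (R : Type*) [NearRing R] {M : Type*} [AddGroup M]
    [NearRingModule R M] (P : Set M) : Prop :=
  ∀ (A B : Set R) (N : Set M), IsIdeal A → IsIdeal B → IsRSubmodule R N →
    (A * B) • N ⊆ P → A • N ⊆ P ∨ B • N ⊆ P

/-- `P` satisfies the 2-classical prime condition (with left `R`-subgroups `A, B`). -/
def Classical2Prime (R : Type*) [NearRing R] {M : Type*} [AddGroup M]
    [NearRingModule R M] (P : Set M) : Prop :=
  ∀ (A B : Set R) (N : Set M), IsLeftRSubgroup A → IsLeftRSubgroup B →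
    IsRSubmodule R N → (A * B) • N ⊆ P → A • N ⊆ P ∨ B • N ⊆ P

/-- `P` satisfies the 3-classical prime condition: `(aR)(bR)N ⊆ P` implies
`aN ⊆ P` or `bN ⊆ P`. -/
def Classical3Prime (R : Type*) [NearRing R] {M : Type*} [AddGroup M]
    [NearRingModule R M] (P : Set M) : Prop :=
  ∀ (a b : R) (N : Set M), IsRSubmodule R N →
    ((({a} : Set R) * Set.univ) * (({b} : Set R) * Set.univ)) • N ⊆ P →
    a • N ⊆ P ∨ b • N ⊆ P

/-- `P` satisfies the c-classical prime condition: `(aRb)N ⊆ P` implies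
`aN ⊆ P` or `bN ⊆ P`. -/
def ClassicalCPrime (R : Type*) [NearRing R] {M : Type*} [AddGroup M]
    [NearRingModule R M] (P : Set M) : Prop :=
  ∀ (a b : R) (N : Set M), IsRSubmodule R N →
    (({a} : Set R) * Set.univ * ({b} : Set R)) • N ⊆ P →
    a • N ⊆ P ∨ b • N ⊆ P

/-- `P` satisfies the 0-prime (Dauns/Juglal) condition: `AB ⊆ P` implies `AM ⊆ P` or
`B ⊆ P` for all ideals `A` of `R` and `R`-submodules `B` of `M`. -/
def Prime0 (R : Type*) [NearRing R] {M : Type*} [AddGroup M]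
    [NearRingModule R M] (P : Set M) : Prop :=
  ∀ (A : Set R) (B : Set M), IsIdeal A → IsRSubmodule R B →
    A • B ⊆ P → A • (Set.univ : Set M) ⊆ P ∨ B ⊆ P

/-- `P` satisfies the 2-prime condition (with left `R`-subgroups `A`). -/
def Prime2 (R : Type*) [NearRing R] {M : Type*} [AddGroup M]
    [NearRingModule R M] (P : Set M) : Prop :=
  ∀ (A : Set R) (B : Set M), IsLeftRSubgroup A → IsRSubmodule R B →
    A • B ⊆ P → A • (Set.univ : Set M) ⊆ P ∨ B ⊆ P

/-- `P` satisfies the 3-prime condition: `aRm ⊆ P` implies `aM ⊆ P` or `m ∈ P`. -/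
def Prime3 (R : Type*) [NearRing R] {M : Type*} [AddGroup M]
    [NearRingModule R M] (P : Set M) : Prop :=
  ∀ (a : R) (m : M), (({a} : Set R) * Set.univ) • ({m} : Set M) ⊆ P →
    a • (Set.univ : Set M) ⊆ P ∨ m ∈ P

/-- `P` satisfies the c-prime (completely prime) condition: `rm ∈ P` implies
`rM ⊆ P` or `m ∈ P`. -/
def PrimeC (R : Type*) [NearRing R] {M : Type*} [AddGroup M]
    [NearRingModule R M] (P : Set M) : Prop :=
  ∀ (r : R) (m : M), r • m ∈ P → r • (Set.univ : Set M) ⊆ P ∨ m ∈ P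

/-- `M` is a 0-classical prime `R`-module: `RM ≠ {0}` and `{0}` is a
0-classical prime `R`-ideal of `M`. -/
def Classical0PrimeModule (R : Type*) [NearRing R] (M : Type*) [AddGroup M]
    [NearRingModule R M] : Prop :=
  (Set.univ : Set R) • (Set.univ : Set M) ≠ ({0} : Set M) ∧
    Classical0Prime R ({0} : Set M)

/-- `M` is a 2-classical prime `R`-module. -/
def Classical2PrimeModule (R : Type*) [NearRing R] (M : Type*) [AddGroup M]
    [NearRingModule R M] : Prop :=
  (Set.univ : Set R) • (Set.univ : Set M) ≠ ({0} : Set M) ∧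
    Classical2Prime R ({0} : Set M)

/-- `M` is a 3-classical prime `R`-module. -/
def Classical3PrimeModule (R : Type*) [NearRing R] (M : Type*) [AddGroup M]
    [NearRingModule R M] : Prop :=
  (Set.univ : Set R) • (Set.univ : Set M) ≠ ({0} : Set M) ∧
    Classical3Prime R ({0} : Set M)

/-- `M` is a c-classical prime `R`-module. -/
def ClassicalCPrimeModule (R : Type*) [NearRing R] (M : Type*) [AddGroup M]
    [NearRingModule R M] : Prop :=
  (Set.univ : Set R) • (Set.univ : Set M) ≠ ({0} : Set M) ∧
    ClassicalCPrime R ({0} : Set M)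

/-- `M` is a 0-prime `R`-module: `RM ≠ {0}` and `{0}` is a 0-prime `R`-ideal of `M`. -/
def Prime0Module (R : Type*) [NearRing R] (M : Type*) [AddGroup M]
    [NearRingModule R M] : Prop :=
  (Set.univ : Set R) • (Set.univ : Set M) ≠ ({0} : Set M) ∧
    Prime0 R ({0} : Set M)

/-- `M` is a 2-prime `R`-module. -/
def Prime2Module (R : Type*) [NearRing R] (M : Type*) [AddGroup M]
    [NearRingModule R M] : Prop :=
  (Set.univ : Set R) • (Set.univ : Set M) ≠ ({0} : Set M) ∧
    Prime2 R ({0} : Set M)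

/-- `M` is a 3-prime `R`-module. -/
def Prime3Module (R : Type*) [NearRing R] (M : Type*) [AddGroup M]
    [NearRingModule R M] : Prop :=
  (Set.univ : Set R) • (Set.univ : Set M) ≠ ({0} : Set M) ∧
    Prime3 R ({0} : Set M)

/-- `M` is a c-prime `R`-module. -/
def PrimeCModule (R : Type*) [NearRing R] (M : Type*) [AddGroup M]
    [NearRingModule R M] : Prop :=
  (Set.univ : Set R) • (Set.univ : Set M) ≠ ({0} : Set M) ∧
    PrimeC R ({0} : Set M)


section Helpers

variable {R M : Type*} [NearRing R] [AddGroup M] [NearRingModule R M]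

lemma zero_smul0 (m : M) : (0 : R) • m = 0 := by
  have h := NearRingModule.add_smul (0 : R) (0 : R) m
  rw [add_zero] at h
  exact (left_eq_add.mp h)

lemma smul_zero0 (r : R) : r • (0 : M) = 0 := by
  calc r • (0 : M) = r • ((0 : R) • (0 : M)) := by rw [zero_smul0]
    _ = (r * 0) • (0 : M) := (NearRingModule.mul_smul r 0 0).symm
    _ = (0 : R) • (0 : M) := by rw [NearRing.mul_zero]
    _ = 0 := zero_smul0 _

lemma neg_smul0 (r : R) (m : M) : (-r) • m = -(r • m) := by
  have h := NearRingModule.add_smul r (-r) m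
  rw [add_neg_cancel, zero_smul0] at h
  exact (neg_eq_of_add_eq_zero_right h.symm).symm

lemma ideal_left_absorb {A : Set R} (hA : IsIdeal A) :
    ∀ r : R, ∀ a ∈ A, r * a ∈ A := by
  intro r a ha
  have h := hA.2.2 r 0 a ha
  simpa [NearRing.mul_zero] using h

lemma smul_singleton_submodule {B : Set R} (hB : IsSubgrp B)
    (habs : ∀ r : R, ∀ b ∈ B, r * b ∈ B) (n : M) :
    IsRSubmodule R (B • ({n} : Set M)) := by
  refine ⟨⟨?_, ?_, ?_⟩, ?_⟩
  · exact ⟨0, hB.1, n, rfl, zero_smul0 n⟩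
  · rintro x ⟨b1, hb1, m1, hm1, rfl⟩ y ⟨b2, hb2, m2, hm2, rfl⟩
    obtain rfl : n = m1 := hm1.symm
    obtain rfl : n = m2 := hm2.symm
    exact ⟨b1 + b2, hB.2.1 b1 hb1 b2 hb2, n, rfl,
      (NearRingModule.add_smul b1 b2 n)⟩
  · rintro x ⟨b, hb, m1, hm1, rfl⟩
    obtain rfl : n = m1 := hm1.symm
    exact ⟨-b, hB.2.2 b hb, n, rfl, neg_smul0 b n⟩
  · rintro r x ⟨b, hb, m1, hm1, rfl⟩
    obtain rfl : n = m1 := hm1.symm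
    exact ⟨r * b, habs r b hb, n, rfl, NearRingModule.mul_smul r b n⟩

lemma gen_prime_to_classical (Q : Set R → Prop)
    (prime : ∀ (A : Set R) (B : Set M), Q A → IsRSubmodule R B →
      A • B ⊆ ({0} : Set M) →
      A • (Set.univ : Set M) ⊆ ({0} : Set M) ∨ B ⊆ ({0} : Set M))
    (A B : Set R) (N : Set M) (hA : Q A) (hBsub : IsSubgrp B)
    (hBabs : ∀ r : R, ∀ b ∈ B, r * b ∈ B) (_hN : IsRSubmodule R N)
    (h : (A * B) • N ⊆ ({0} : Set M)) :
    A • N ⊆ ({0} : Set M) ∨ B • N ⊆ ({0} : Set M) := by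
  by_cases hc : ∀ n ∈ N, (B • ({n} : Set M)) ⊆ ({0} : Set M)
  · right
    rintro x ⟨b, hb, n, hn, rfl⟩
    exact hc n hn ⟨b, hb, n, rfl, rfl⟩
  · push_neg at hc
    obtain ⟨n, hn, hne⟩ := hc
    have hsub : A • (B • ({n} : Set M)) ⊆ ({0} : Set M) := by
      rintro x ⟨a, ha, y, ⟨b, hb, m1, hm1, rfl⟩, rfl⟩
      obtain rfl : n = m1 := hm1.symm
      have hx : (a * b) • n ∈ ({0} : Set M) :=
        h ⟨a * b, ⟨a, ha, b, hb, rfl⟩, n, hn, rfl⟩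
      simpa [NearRingModule.mul_smul] using hx
    rcases prime A (B • ({n} : Set M)) hA
        (smul_singleton_submodule hBsub hBabs n) hsub with h1 | h2
    · left
      exact (Set.smul_subset_smul_left (Set.subset_univ N)).trans h1
    · exact absurd h2 hne

end Helpers

/-- Statement 8: every `v`-prime `R`-module is a `v`-classical prime `R`-module,
for `v ∈ {0,2,3,c}`. -/
theorem stmt_8 {R M : Type*} [NearRing R] [AddGroup M] [NearRingModule R M] :
    (Prime0Module R M → Classical0PrimeModule R M) ∧
    (Prime2Module R M → Classical2PrimeModule R M) ∧
    (Prime3Module R M → Classical3PrimeModule R M) ∧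
    (PrimeCModule R M → ClassicalCPrimeModule R M) := by
  refine ⟨?_, ?_, ?_, ?_⟩
  · rintro ⟨hRM, hP⟩
    refine ⟨hRM, ?_⟩
    intro A B N hAI hBI hNs hprod
    exact gen_prime_to_classical IsIdeal hP A B N hAI hBI.1.1
      (ideal_left_absorb hBI) hNs hprod
  · rintro ⟨hRM, hP⟩
    refine ⟨hRM, ?_⟩
    intro A B N hAI hBI hNs hprod
    exact gen_prime_to_classical IsLeftRSubgroup hP A B N hAI hBI.1
      hBI.2 hNs hprod
  · rintro ⟨hRM, hP⟩
    refine ⟨hRM, ?_⟩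
    intro a b N hNs hprod
    by_cases h1 : a • (Set.univ : Set M) ⊆ ({0} : Set M)
    · left
      exact (Set.smul_set_mono (Set.subset_univ N)).trans h1
    · have key : ∀ s : R, ∀ n ∈ N, b • (s • n) = 0 := by
        intro s n hn
        have hsub : (({a} : Set R) * Set.univ) • ({b • (s • n)} : Set M) ⊆
            ({0} : Set M) := by
          rintro x ⟨y, ⟨a', ha', r, _, rfl⟩, m1, hm1, rfl⟩
          obtain rfl : a = a' := ha'.symm
          obtain rfl : b • (s • n) = m1 := hm1.symm
          have hx : ((a * r) * (b * s)) • n ∈ ({0} : Set M) :=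
            hprod ⟨(a * r) * (b * s),
              ⟨a * r, ⟨a, rfl, r, trivial, rfl⟩,
               b * s, ⟨b, rfl, s, trivial, rfl⟩, rfl⟩, n, hn, rfl⟩
          have heq : ((a * r) * (b * s)) • n = (a * r) • (b • (s • n)) := by
            simp only [NearRingModule.mul_smul]
          rw [heq] at hx
          exact hx
        rcases hP a (b • (s • n)) hsub with hcase | hcase
        · exact absurd hcase h1
        · exact hcase
      by_cases h2 : b • (Set.univ : Set M) ⊆ ({0} : Set M)
      · right
        exact (Set.smul_set_mono (Set.subset_univ N)).trans h2
      · right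
        rintro x ⟨n, hn, rfl⟩
        have hsub : (({b} : Set R) * Set.univ) • ({n} : Set M) ⊆
            ({0} : Set M) := by
          rintro x ⟨y, ⟨b'', hb'', s, _, rfl⟩, m1, hm1, rfl⟩
          obtain rfl : b = b'' := hb''.symm
          obtain rfl : n = m1 := hm1.symm
          have heq : (b * s) • n = b • (s • n) := NearRingModule.mul_smul b s n
          simp [heq, key s n hn]
        rcases hP b n hsub with hcase | hcase
        · exact absurd hcase h2
        · obtain rfl : n = (0 : M) := hcase
          simp [smul_zero0]
  · rintro ⟨hRM, hP⟩
    refine ⟨hRM, ?_⟩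
    intro a b N hNs hprod
    by_cases h1 : a • (Set.univ : Set M) ⊆ ({0} : Set M)
    · left
      exact (Set.smul_set_mono (Set.subset_univ N)).trans h1
    · have key : ∀ r : R, ∀ n ∈ N, r • (b • n) = 0 := by
        intro r n hn
        have hx : ((a * r) * b) • n ∈ ({0} : Set M) :=
          hprod ⟨(a * r) * b,
            ⟨a * r, ⟨a, rfl, r, trivial, rfl⟩, b, rfl, rfl⟩, n, hn, rfl⟩
        have heq : ((a * r) * b) • n = a • (r • (b • n)) := by
          simp only [NearRingModule.mul_smul]
        rw [heq] at hx
        rcases hP a (r • (b • n)) hx with hcase | hcase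
        · exact absurd hcase h1
        · exact hcase
      right
      rintro x ⟨n, hn, rfl⟩
      by_contra hbn
      have hall : ∀ r : R, r • (Set.univ : Set M) ⊆ ({0} : Set M) := by
        intro r
        rcases hP r (b • n) (key r n hn) with hcase | hcase
        · exact hcase
        · exact absurd hcase hbn
      apply hRM
      apply Set.Subset.antisymm
      · rintro x ⟨r, _, m1, hm1, rfl⟩
        exact hall r ⟨m1, trivial, rfl⟩
      · rintro x hx
        obtain rfl : x = (0 : M) := hx
        exact ⟨0, trivial, 0, trivial, zero_smul0 0⟩
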